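/- Let (Y_n)_{n≥-2} be i.i.d. uniform on [0,1], X_{n,1} = max{Y_n, Y_{n-2}, Y_{n-3}}, u_n = 1 - τ'/n with τ' > 0, and let A_{i,n} = {X_{i,1} ≤ u_n < X_{i+1,1}} denote an upcrossing at time i. Then P(A_{1,n} ∩ A_{3,n}^c)/P(A_{1,n}) → 1/2 as n → ∞; i.e., the upcrossings index of the sequence (X_{n,1}) is η₁ = 1/2. -/

import Mathlib

/-!
On `A₁ = {X₁ ≤ v < X₂}` we have `Y₋₂, Y₋₁, Y₁ ≤ v`, and then `X₂ > v` means `Y₀ > v` or `Y₂ > v`;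
so `A₁` is "`Y₋₂, Y₋₁, Y₁ ≤ v`" minus "`Y₋₂, …, Y₂ ≤ v`", of probability `v³ - v⁵`. On `A₃` also
`Y₀ ≤ v`, so `A₁ ∩ A₃` forces `Y₂ > v`, which already gives `X₄ > v`: it is "`Y₋₂, Y₋₁, Y₀, Y₁, Y₃ ≤ v`"
minus "`Y₋₂, …, Y₃ ≤ v`", of probability `v⁵ - v⁶`. Hence
`P(A₁ ∩ A₃ᶜ) / P(A₁) = (1 + v - v²) / (1 + v)`, which tends to `1/2` as `v = uₙ → 1`.
-/

open MeasureTheory ProbabilityTheory Filter Set Topology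

section

variable {Ω ι : Type*}

def allBelow (Y : ι → Ω → ℝ) (v : ℝ) (s : Finset ι) : Set Ω := ⋂ i ∈ s, Y i ⁻¹' Iic v

@[simp]
lemma mem_allBelow {Y : ι → Ω → ℝ} {v : ℝ} {s : Finset ι} {ω : Ω} :
    ω ∈ allBelow Y v s ↔ ∀ i ∈ s, Y i ω ≤ v := by
  simp [allBelow]

def movingMax (Y : ℤ → Ω → ℝ) (i : ℤ) (ω : Ω) : ℝ :=
  max (Y i ω) (max (Y (i - 2) ω) (Y (i - 3) ω))

def upcrossing (Z : ℤ → Ω → ℝ) (v : ℝ) (i : ℤ) : Set Ω := {ω | Z i ω ≤ v ∧ v < Z (i + 1) ω}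

section Uniform

variable {Y : ι → Ω → ℝ} {v : ℝ}

lemma allBelow_anti {s t : Finset ι} (h : s ⊆ t) : allBelow Y v t ⊆ allBelow Y v s :=
  biInter_subset_biInter_left h

variable [MeasurableSpace Ω] {P : Measure Ω}

lemma measurableSet_allBelow (hYm : ∀ i, Measurable (Y i)) (s : Finset ι) :
    MeasurableSet (allBelow Y v s) :=
  Finset.measurableSet_biInter s fun i _ => hYm i measurableSet_Iic

lemma measure_preimage_Iic_of_map_eq_uniform {Z : Ω → ℝ} (hZ : Measurable Z)
    (hU : P.map Z = volume.restrict (Icc 0 1)) (hv : v ≤ 1) :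
    P (Z ⁻¹' Iic v) = ENNReal.ofReal v := by
  rw [← Measure.map_apply hZ measurableSet_Iic, hU, Measure.restrict_apply measurableSet_Iic,
    inter_comm, ← Ici_inter_Iic, inter_assoc, Iic_inter_Iic, inf_eq_right.mpr hv, Ici_inter_Iic,
    Real.volume_Icc, sub_zero]

lemma measureReal_allBelow (hYm : ∀ i, Measurable (Y i)) (hIndep : iIndepFun Y P)
    (hUnif : ∀ i, P.map (Y i) = volume.restrict (Icc 0 1)) (hv0 : 0 ≤ v) (hv1 : v ≤ 1)
    (s : Finset ι) :
    P.real (allBelow Y v s) = v ^ s.card := by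
  rw [measureReal_def, allBelow,
    hIndep.measure_inter_preimage_eq_mul s (fun _ _ => measurableSet_Iic)]
  simp [measure_preimage_Iic_of_map_eq_uniform (hYm _) (hUnif _) hv1, hv0]

lemma measureReal_allBelow_sdiff [IsFiniteMeasure P] (hYm : ∀ i, Measurable (Y i))
    (hIndep : iIndepFun Y P) (hUnif : ∀ i, P.map (Y i) = volume.restrict (Icc 0 1))
    (hv0 : 0 ≤ v) (hv1 : v ≤ 1) {s t : Finset ι} (h : s ⊆ t) :
    P.real (allBelow Y v s \ allBelow Y v t) = v ^ s.card - v ^ t.card := by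
  rw [measureReal_sdiff (allBelow_anti h) (measurableSet_allBelow hYm t),
    measureReal_allBelow hYm hIndep hUnif hv0 hv1, measureReal_allBelow hYm hIndep hUnif hv0 hv1]

end Uniform

section Upcrossings

variable (Y : ℤ → Ω → ℝ) (v : ℝ)

lemma upcrossing_movingMax_one :
    upcrossing (movingMax Y) v 1 = allBelow Y v {-2, -1, 1} \ allBelow Y v {-2, -1, 0, 1, 2} := by
  ext ω
  norm_num [upcrossing, movingMax]
  simp only [← not_le]
  tauto

lemma upcrossing_movingMax_one_inter_three :
    upcrossing (movingMax Y) v 1 ∩ upcrossing (movingMax Y) v 3 =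
      allBelow Y v {-2, -1, 0, 1, 3} \ allBelow Y v {-2, -1, 0, 1, 2, 3} := by
  ext ω
  norm_num [upcrossing, movingMax]
  simp only [← not_le]
  tauto

end Upcrossings

lemma measureReal_upcrossing_inter_compl_div_eq [MeasurableSpace Ω] {P : Measure Ω}
    [IsFiniteMeasure P] {Y : ℤ → Ω → ℝ} (hYm : ∀ i, Measurable (Y i)) (hIndep : iIndepFun Y P)
    (hUnif : ∀ i, P.map (Y i) = volume.restrict (Icc 0 1)) {v : ℝ} (hv0 : 0 < v) (hv1 : v < 1) :
    P.real (upcrossing (movingMax Y) v 1 ∩ (upcrossing (movingMax Y) v 3)ᶜ) /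
        P.real (upcrossing (movingMax Y) v 1) = (1 + v - v ^ 2) / (1 + v) := by
  have hU1 : P.real (upcrossing (movingMax Y) v 1) = v ^ 3 - v ^ 5 := by
    rw [upcrossing_movingMax_one]
    exact measureReal_allBelow_sdiff hYm hIndep hUnif hv0.le hv1.le (by decide)
  have hU13 : P.real (upcrossing (movingMax Y) v 1 ∩ upcrossing (movingMax Y) v 3) =
      v ^ 5 - v ^ 6 := by
    rw [upcrossing_movingMax_one_inter_three]
    exact measureReal_allBelow_sdiff hYm hIndep hUnif hv0.le hv1.le (by decide)
  have hmeas : MeasurableSet (upcrossing (movingMax Y) v 1 ∩ upcrossing (movingMax Y) v 3) := by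
    rw [upcrossing_movingMax_one_inter_three]
    exact (measurableSet_allBelow hYm _).diff (measurableSet_allBelow hYm _)
  have hpos : 0 < v ^ 3 - v ^ 5 := by
    nlinarith [mul_pos (pow_pos hv0 3) (by nlinarith : 0 < 1 - v ^ 2)]
  rw [← Set.sdiff_eq, ← sdiff_self_inter, measureReal_sdiff inter_subset_left hmeas, hU1, hU13,
    div_eq_div_iff hpos.ne' (by linarith)]
  ring

end

theorem stmt8
    {Ω : Type*} [MeasurableSpace Ω] (P : Measure Ω) [IsProbabilityMeasure P]
    (Y : ℤ → Ω → ℝ) (hYm : ∀ i, Measurable (Y i))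
    (hIndep : iIndepFun Y P)
    (hUnif : ∀ i, Measure.map (Y i) P = volume.restrict (Icc (0:ℝ) 1))
    (τ' : ℝ) (hτ : 0 < τ')
    (X : ℕ → Ω → ℝ)
    (hX : ∀ i : ℕ, X i = fun ω => max (Y i ω) (max (Y ((i:ℤ) - 2) ω) (Y ((i:ℤ) - 3) ω)))
    (u : ℕ → ℝ) (hu : ∀ n : ℕ, u n = 1 - τ' / n)
    (A : ℕ → ℕ → Set Ω)
    (hA : ∀ i n, A i n = {ω | X i ω ≤ u n ∧ u n < X (i + 1) ω}) :
    Tendsto (fun n : ℕ => (P (A 1 n ∩ (A 3 n)ᶜ)).toReal / (P (A 1 n)).toReal)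
      atTop (nhds (1 / 2)) := by
  have hA_eq (i n : ℕ) : A i n = upcrossing (movingMax Y) (u n) i := by
    ext ω
    simp [hA, hX, upcrossing, movingMax]
  have hu_lim : Tendsto u atTop (𝓝 1) := by
    rw [show u = fun n : ℕ => 1 - τ' / n from funext hu]
    simpa using (tendsto_const_div_atTop_nhds_zero_nat τ').const_sub 1
  have hu_pos : ∀ᶠ n in atTop, 0 < u n := hu_lim.eventually (Ioi_mem_nhds one_pos)
  have hu_lt_one : ∀ᶠ n in atTop, u n < 1 := by
    filter_upwards [eventually_gt_atTop 0] with n hn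
    linarith [hu n, div_pos hτ (Nat.cast_pos.mpr hn)]
  have hf : Tendsto (fun v : ℝ => (1 + v - v ^ 2) / (1 + v)) (𝓝 1) (𝓝 (1 / 2)) := by
    convert ((tendsto_id.const_add 1).sub (tendsto_id.pow 2)).div (tendsto_id.const_add 1)
      (by norm_num : (1 : ℝ) + 1 ≠ 0) using 2 <;> norm_num
  refine (hf.comp hu_lim).congr' ?_
  filter_upwards [hu_pos, hu_lt_one] with n hn0 hn1
  simpa [hA_eq, measureReal_def] using
    (measureReal_upcrossing_inter_compl_div_eq hYm hIndep hUnif hn0 hn1).symm
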